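/- arXiv:1908.02378 — 3 statements merged into one kernel-verified Lean document; each statement's English description precedes it below -/
import Mathlib

section
/- For integers N ≥ 4 and 0 ≤ w ≤ N, K^N_w(4)/C(N,w) = 1 − 8w(N²−3N+4)/((N−1)(N−2)(N−3)) + 8w²(3N²−3N+4)/(N(N−1)(N−2)(N−3)) − 32w³/((N−1)(N−2)(N−3)) + 16w⁴/(N(N−1)(N−2)(N−3)). -/
/-!
Write `x^{(k)} = x(x-1)⋯(x-k+1)`. For `j ≤ 4`, `C(N-4, w-j) · N^{(4)} = C(N, w) · w^{(j)} · (N-w)^{(4-j)}`,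
both sides being `N!/((w-j)! (N-w-4+j)!)`, or both `0` when `w-j > N-4`. Hence
`K^N_w(4) · N^{(4)} = C(N, w) · ∑ⱼ (-1)ʲ C(4, j) w^{(j)} (N-w)^{(4-j)}`, and the claim is the
expansion of this quartic in `w`.
-/

/-- Binary Krawtchouk polynomial K^N_k(z) = Σ_{j=0}^{z} C(z,j)·C(N−z,k−j)·(−1)^j,
with the convention that C(n,m) = 0 for m < 0 (implemented by an `if`). -/
def krawtchouk (N k z : ℕ) : ℤ :=
  ∑ j ∈ Finset.range (z + 1),
    (-1 : ℤ) ^ j * (z.choose j) * (if j ≤ k then ((N - z).choose (k - j) : ℤ) else 0)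

open Nat Finset

theorem Nat.choose_sub_mul_descFactorial {N w d j : ℕ} (hjd : j ≤ d) (hdN : d ≤ N) (hjw : j ≤ w)
    (hwN : w ≤ N) :
    (N - d).choose (w - j) * N.descFactorial d
      = N.choose w * (w.descFactorial j * (N - w).descFactorial (d - j)) := by
  by_cases hfit : w - j ≤ N - d
  · -- after multiplying by `(w - j)! (N - d - (w - j))!` both sides become `N!`
    have hrest : N - w - (d - j) = N - d - (w - j) := by omega
    have hlhs := choose_mul_factorial_mul_factorial hfit
    have hN := factorial_mul_descFactorial hdN
    have hw := factorial_mul_descFactorial hjw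
    have hNw := factorial_mul_descFactorial (show d - j ≤ N - w by omega)
    have hC := choose_mul_factorial_mul_factorial hwN
    apply Nat.eq_of_mul_eq_mul_right
      (mul_pos (w - j).factorial_pos (N - d - (w - j)).factorial_pos)
    rw [hrest] at hNw
    calc (N - d).choose (w - j) * N.descFactorial d * ((w - j)! * (N - d - (w - j))!)
        = (N - d).choose (w - j) * (w - j)! * (N - d - (w - j))! * N.descFactorial d := by ring
      _ = N ! := by rw [hlhs, hN]
      _ = N.choose w * ((w - j)! * w.descFactorial j)
            * ((N - d - (w - j))! * (N - w).descFactorial (d - j)) := by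
          rw [hw, hNw, hC]
      _ = _ := by ring
  · rw [choose_eq_zero_of_lt (by omega), descFactorial_eq_zero_iff_lt.mpr (by omega : N - w < d - j)]
    simp

theorem krawtchouk_mul_descFactorial {N w z : ℕ} (hzN : z ≤ N) (hwN : w ≤ N) :
    krawtchouk N w z * N.descFactorial z
      = N.choose w * ∑ j ∈ range (z + 1),
          (-1 : ℤ) ^ j * z.choose j * w.descFactorial j * (N - w).descFactorial (z - j) := by
  rw [krawtchouk, sum_mul, mul_sum]
  refine sum_congr rfl fun j hj => ?_
  have hjz : j ≤ z := Nat.lt_succ_iff.mp (mem_range.mp hj)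
  split_ifs with hjw
  · have := congrArg (Nat.cast : ℕ → ℤ) (choose_sub_mul_descFactorial hjz hzN hjw hwN)
    push_cast at this
    linear_combination ((-1 : ℤ) ^ j * z.choose j) * this
  · simp [descFactorial_eq_zero_iff_lt.mpr (not_le.mp hjw)]

/-- K^N_w(4)/C(N,w) for N ≥ 4 and w ≤ N. -/
theorem krawtchouk_four_normalized (N w : ℕ) (hN : 4 ≤ N) (hw : w ≤ N) :
    (krawtchouk N w 4 : ℚ) / (N.choose w : ℚ)
      = 1 - 8 * (w : ℚ) * ((N : ℚ) ^ 2 - 3 * N + 4) / (((N : ℚ) - 1) * (N - 2) * (N - 3))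
        + 8 * (w : ℚ) ^ 2 * (3 * (N : ℚ) ^ 2 - 3 * N + 4)
            / ((N : ℚ) * (N - 1) * (N - 2) * (N - 3))
        - 32 * (w : ℚ) ^ 3 / (((N : ℚ) - 1) * (N - 2) * (N - 3))
        + 16 * (w : ℚ) ^ 4 / ((N : ℚ) * (N - 1) * (N - 2) * (N - 3)) := by
  have hK := congrArg (Int.cast : ℤ → ℚ) (krawtchouk_mul_descFactorial hN hw)
  simp only [sum_range_succ, sum_range_zero] at hK
  push_cast [← descPochhammer_eval_eq_descFactorial ℚ, Nat.cast_sub hw] at hK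
  norm_num [descPochhammer_succ_eval, Nat.choose] at hK
  have hC : (N.choose w : ℚ) ≠ 0 := Nat.cast_ne_zero.mpr (choose_pos hw).ne'
  have hN' : (4 : ℚ) ≤ N := by exact_mod_cast hN
  have h0 : (N : ℚ) ≠ 0 := by linarith
  have h1 : (N : ℚ) - 1 ≠ 0 := by linarith
  have h2 : (N : ℚ) - 2 ≠ 0 := by linarith
  have h3 : (N : ℚ) - 3 ≠ 0 := by linarith
  rw [div_eq_iff hC]
  field_simp
  linear_combination hK
end

section
/- Let g ≥ 1, n ≥ 1 be integers and N = 2gn. Then Σ_{j=0}^{n} 2^{−n} C(n,j) · (1 − 4·gj·(N−gj)/(N(N−1))) = (g(n+1) − 2)/(4gn − 2). -/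
/-!
The weights `C(n, j) / 2 ^ n` form the binomial distribution `Bin(n, 1/2)`, whose first two
moments are `n / 2` and `n (n + 1) / 4`. Since `N = 2gn`, the summand is a quadratic polynomial
in `j`, so the sum depends only on these two moments, and substituting them gives the closed form.
-/

open Finset

namespace Nat

theorem two_mul_sum_range_mul_choose (n : ℕ) :
    2 * ∑ i ∈ range (n + 1), i * n.choose i = n * 2 ^ n := by
  rcases n.eq_zero_or_pos with rfl | hn
  · simp
  rw [sum_range_mul_choose, ← mul_pow_sub_one hn.ne' 2]
  ring

theorem four_mul_sum_range_sq_mul_choose (n : ℕ) :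
    4 * ∑ i ∈ range (n + 1), i ^ 2 * n.choose i = n * (n + 1) * 2 ^ n := by
  cases n with
  | zero => simp
  | succ m =>
    have hshift : ∀ i, (i + 1) ^ 2 * (m + 1).choose (i + 1) =
        (m + 1) * (i * m.choose i) + (m + 1) * m.choose i := by
      intro i
      rw [sq, mul_assoc, mul_comm (i + 1) ((m + 1).choose _), ← add_one_mul_choose_eq]
      ring
    rw [sum_range_succ']
    simp only [hshift, sum_add_distrib, ← mul_sum, sum_range_choose, zero_pow two_ne_zero,
      zero_mul, add_zero]
    have hfirst := two_mul_sum_range_mul_choose m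
    rw [pow_succ]
    nlinarith [hfirst]

end Nat

theorem sum_choose_div_two_pow_mul_quadratic {K : Type*} [Field K] [CharZero K]
    (n : ℕ) (a b c : K) :
    ∑ j ∈ range (n + 1), (n.choose j : K) / 2 ^ n * (a + b * j + c * j ^ 2) =
      a + b * n / 2 + c * n * (n + 1) / 4 := by
  have hmass : ∑ j ∈ range (n + 1), (n.choose j : K) = 2 ^ n := by
    exact_mod_cast Nat.sum_range_choose n
  have hfirst : ∑ j ∈ range (n + 1), (n.choose j : K) * j = n * 2 ^ n / 2 := by
    simp only [mul_comm (n.choose _ : K)]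
    rw [eq_div_iff two_ne_zero, mul_comm]
    exact_mod_cast Nat.two_mul_sum_range_mul_choose n
  have hsecond : ∑ j ∈ range (n + 1), (n.choose j : K) * j ^ 2 = n * (n + 1) * 2 ^ n / 4 := by
    simp only [mul_comm (n.choose _ : K)]
    rw [eq_div_iff (by norm_num), mul_comm]
    exact_mod_cast Nat.four_mul_sum_range_sq_mul_choose n
  simp only [mul_add, sum_add_distrib]
  simp only [div_mul_eq_mul_div, mul_left_comm _ b, mul_left_comm _ c, ← sum_div, ← mul_sum]
  rw [← sum_mul, hmass, hfirst, hsecond]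
  field_simp

/-- v₂ = Σ_{j=0}^{n} 2^{−n} C(n,j)(1 − 4gj(N−gj)/(N(N−1))) = (g(n+1)−2)/(4gn−2),
where N = 2gn. -/
theorem gnu_v2 (g n : ℕ) (hg : 1 ≤ g) (hn : 1 ≤ n) (N : ℕ) (hN : N = 2 * g * n) :
    ∑ j ∈ Finset.range (n + 1),
      (n.choose j : ℚ) / 2 ^ n *
        (1 - 4 * ((g : ℚ) * j) * ((N : ℚ) - (g : ℚ) * j) / ((N : ℚ) * ((N : ℚ) - 1)))
      = ((g : ℚ) * ((n : ℚ) + 1) - 2) / (4 * (g : ℚ) * n - 2) := by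
  have hNq : (N : ℚ) = 2 * g * n := by rw [hN]; push_cast; ring
  have hgn : (1 : ℚ) ≤ g * n := by exact_mod_cast one_le_mul hg hn
  have hN0 : (N : ℚ) ≠ 0 := by rw [hNq]; positivity
  have hN1 : (N : ℚ) - 1 ≠ 0 := by rw [hNq]; linarith
  have hquad : ∀ j : ℕ, 1 - 4 * ((g : ℚ) * j) * ((N : ℚ) - g * j) / (N * (N - 1)) =
      1 + (-4 * g / (N - 1)) * j + (4 * g ^ 2 / (N * (N - 1))) * j ^ 2 := by
    intro j
    field_simp
    ring
  simp only [hquad, sum_choose_div_two_pow_mul_quadratic]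
  rw [show (4 * g * n - 2 : ℚ) = 2 * (N - 1) by rw [hNq]; ring]
  field_simp
  rw [hNq]
  ring
end

section
/- Let g ≥ 1, n ≥ 1 be integers, N = 2gn, and define v₃ = Σ_{j=0}^{n} 2^{−n} C(n,j) · P(gj) where P(w) = 1 + w(−6N²+6N−4)/(N(N−1)(N−2)) + 12w²/((N−1)(N−2)) − 8w³/(N(N−1)(N−2)). Then v₃ = (g²n(n+3) − 6gn + 2)/(4(gn−1)(2gn−1)), provided N ≥ 3 and gn > 1. -/
/-!
The summand is a cubic in `j`, so `v₃` is the expectation of a cubic polynomial of a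
Binomial(n, 1/2) variable. Its factorial moments are `E[C(j, s)] = C(n, s) / 2^s`, which gives
`E[j] = n/2`, `E[j²] = n(n+1)/4`, `E[j³] = n²(n+3)/8`; substituting these, the claim is an
identity of rational functions in `g` and `n`.
-/

open Finset

theorem Nat.sum_range_choose_mul_choose (n s : ℕ) :
    ∑ j ∈ range (n + 1), n.choose j * j.choose s = n.choose s * 2 ^ (n - s) := by
  rcases lt_or_ge n s with hns | hsn
  · rw [Nat.choose_eq_zero_of_lt hns, zero_mul]
    exact sum_eq_zero fun j hj ↦ by
      rw [Nat.choose_eq_zero_of_lt ((mem_range_succ_iff.mp hj).trans_lt hns), mul_zero]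
  · obtain ⟨m, rfl⟩ := Nat.exists_eq_add_of_le hsn
    have hlow : ∑ j ∈ range s, (s + m).choose j * j.choose s = 0 :=
      sum_eq_zero fun j hj ↦ by rw [Nat.choose_eq_zero_of_lt (mem_range.mp hj), mul_zero]
    rw [show s + m + 1 = s + (m + 1) by omega, sum_range_add, hlow, zero_add,
      Nat.add_sub_cancel_left, ← Nat.sum_range_choose, mul_sum]
    refine sum_congr rfl fun i _ ↦ ?_
    rw [Nat.choose_mul (Nat.le_add_right s i)]
    simp

theorem Nat.cast_choose_three {K : Type*} [Field K] [CharZero K] (a : ℕ) :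
    (a.choose 3 : K) = a * (a - 1) * (a - 2) / 6 := by
  rw [Nat.cast_choose_eq_descPochhammer_div]
  simp [descPochhammer_succ_right, Nat.factorial]

section Binomial

variable {K : Type*} [Field K] [CharZero K]

theorem sum_choose_div_two_pow_mul_choose (n s : ℕ) :
    ∑ j ∈ range (n + 1), (n.choose j : K) / 2 ^ n * j.choose s = n.choose s / 2 ^ s := by
  have h := congrArg (Nat.cast : ℕ → K) (Nat.sum_range_choose_mul_choose n s)
  push_cast at h
  simp_rw [div_mul_eq_mul_div, ← sum_div, h]
  rcases lt_or_ge n s with hns | hsn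
  · simp [Nat.choose_eq_zero_of_lt hns]
  · rw [pow_sub₀ _ two_ne_zero hsn]
    field_simp

theorem sum_choose_div_two_pow_mul_cubic (n : ℕ) (a b c d : K) :
    ∑ j ∈ range (n + 1), (n.choose j : K) / 2 ^ n * (a + b * j + c * j ^ 2 + d * j ^ 3)
      = a + b * n / 2 + c * n * (n + 1) / 4 + d * n ^ 2 * (n + 3) / 8 := by
  have hcubic (x : ℕ) : a + b * x + c * x ^ 2 + d * x ^ 3 = a * x.choose 0
      + (b + c + d) * x.choose 1 + (2 * c + 6 * d) * x.choose 2 + 6 * d * x.choose 3 := by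
    rw [Nat.choose_zero_right, Nat.choose_one_right, Nat.cast_choose_two, Nat.cast_choose_three]
    push_cast
    ring
  simp only [hcubic, mul_add, sum_add_distrib, mul_left_comm (_ / (2 : K) ^ n), ← mul_sum,
    sum_choose_div_two_pow_mul_choose]
  rw [Nat.choose_zero_right, Nat.choose_one_right, Nat.cast_choose_two, Nat.cast_choose_three]
  push_cast
  ring

end Binomial

theorem gnu_v3_general (g n : ℕ) (N : ℕ) (hN : N = 2 * g * n)
    (hgn : 1 < g * n) :
    (∑ j ∈ Finset.range (n + 1),
      (n.choose j : ℚ) / 2 ^ n *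
        (1 + ((g : ℚ) * j) * (-6 * (N : ℚ) ^ 2 + 6 * N - 4) / ((N : ℚ) * (N - 1) * (N - 2))
           + 12 * ((g : ℚ) * j) ^ 2 / (((N : ℚ) - 1) * ((N : ℚ) - 2))
           - 8 * ((g : ℚ) * j) ^ 3 / ((N : ℚ) * (N - 1) * (N - 2))))
      = ((g : ℚ) ^ 2 * n * ((n : ℚ) + 3) - 6 * (g : ℚ) * n + 2)
          / (4 * ((g : ℚ) * n - 1) * (2 * (g : ℚ) * n - 1)) := by
  have hNq : (N : ℚ) = 2 * g * n := by rw [hN]; push_cast; ring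
  have hN4 : (4 : ℚ) ≤ N := by exact_mod_cast (by rw [hN, mul_assoc]; omega : 4 ≤ N)
  have hN0 : (N : ℚ) ≠ 0 := by linarith
  have hN1 : (N : ℚ) - 1 ≠ 0 := by linarith
  have hN2 : (N : ℚ) - 2 ≠ 0 := by linarith
  calc _ = ∑ j ∈ range (n + 1), (n.choose j : ℚ) / 2 ^ n *
          (1 + g * (-6 * N ^ 2 + 6 * N - 4) / (N * (N - 1) * (N - 2)) * j
            + 12 * g ^ 2 / ((N - 1) * (N - 2)) * j ^ 2
            + -8 * g ^ 3 / (N * (N - 1) * (N - 2)) * j ^ 3) :=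
        sum_congr rfl fun j _ ↦ by ring
    _ = _ := by
      -- with the right-hand denominator written in `N`, `field_simp` only has to clear `N, N - 1, N - 2`
      rw [sum_choose_div_two_pow_mul_cubic,
        show 4 * ((g : ℚ) * n - 1) * (2 * g * n - 1) = 2 * ((N - 1) * (N - 2)) by rw [hNq]; ring]
      field_simp
      rw [hNq]
      ring

/-- v₃ = Σ_{j=0}^{n} 2^{−n} C(n,j)·P(gj), where
P(w) = 1 + w(−6N²+6N−4)/(N(N−1)(N−2)) + 12w²/((N−1)(N−2)) − 8w³/(N(N−1)(N−2)),
equals (g²n(n+3) − 6gn + 2)/(4(gn−1)(2gn−1)) for N = 2gn with N ≥ 3 and gn > 1. -/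
theorem gnu_v3 (g n : ℕ) (hg : 1 ≤ g) (hn : 1 ≤ n) (N : ℕ) (hN : N = 2 * g * n)
    (hN3 : 3 ≤ N) (hgn : 1 < g * n) :
    (∑ j ∈ Finset.range (n + 1),
      (n.choose j : ℚ) / 2 ^ n *
        (1 + ((g : ℚ) * j) * (-6 * (N : ℚ) ^ 2 + 6 * N - 4) / ((N : ℚ) * (N - 1) * (N - 2))
           + 12 * ((g : ℚ) * j) ^ 2 / (((N : ℚ) - 1) * ((N : ℚ) - 2))
           - 8 * ((g : ℚ) * j) ^ 3 / ((N : ℚ) * (N - 1) * (N - 2))))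
      = ((g : ℚ) ^ 2 * n * ((n : ℚ) + 3) - 6 * (g : ℚ) * n + 2)
          / (4 * ((g : ℚ) * n - 1) * (2 * (g : ℚ) * n - 1)) :=
  gnu_v3_general g n N hN hgn
end
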